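/- arXiv:0906.3499 — 2 statements merged into one kernel-verified Lean document; each statement's English description precedes it below -/
import Mathlib

section
/- Suppose 𝒜 : ℝ^{m×n} → ℝ^p satisfies the RIP with constant δ_r(𝒜). Let Ψ, Ψ' be orthonormal subsets of ℝ^{m×n} such that rank(P_{Ψ∪Ψ'} X) ≤ r for every X ∈ ℝ^{m×n}. Then for all X ∈ span(Ψ'): ‖P_Ψ 𝒜* 𝒜 (I − P_Ψ) X‖_F ≤ δ_r(𝒜) ‖(I − P_Ψ) X‖_F. -/
open scoped BigOperators
open Matrix

noncomputable section

/-- Frobenius (trace) inner product of real matrices. -/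
def frobInner {m n : ℕ} (X Y : Matrix (Fin m) (Fin n) ℝ) : ℝ :=
  ∑ i, ∑ j, X i j * Y i j

/-- Frobenius norm of a real matrix. -/
def frobNorm {m n : ℕ} (X : Matrix (Fin m) (Fin n) ℝ) : ℝ :=
  Real.sqrt (frobInner X X)

/-- Euclidean norm of a vector in ℝ^p. -/
def vecNorm {p : ℕ} (b : Fin p → ℝ) : ℝ :=
  Real.sqrt (∑ i, b i ^ 2)

/-- A finite set of matrices is orthonormal w.r.t. the trace inner product. -/
def IsOrthonormalSet {m n : ℕ} (Ψ : Finset (Matrix (Fin m) (Fin n) ℝ)) : Prop :=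
  (∀ ψ ∈ Ψ, frobInner ψ ψ = 1) ∧ ∀ ψ ∈ Ψ, ∀ φ ∈ Ψ, ψ ≠ φ → frobInner ψ φ = 0

/-- Orthogonal projection onto the span of an orthonormal family Ψ. -/
def projSpan {m n : ℕ} (Ψ : Finset (Matrix (Fin m) (Fin n) ℝ))
    (X : Matrix (Fin m) (Fin n) ℝ) : Matrix (Fin m) (Fin n) ℝ :=
  ∑ ψ ∈ Ψ, frobInner ψ X • ψ

end

/-!
Put `Y = X - P_Ψ X` and `Z = P_Ψ 𝒜*𝒜 Y`. Then `‖Z‖² = ⟨𝒜*𝒜 Y, Z⟩ = ⟨𝒜 Z, 𝒜 Y⟩`, and `Z ⊥ Y` with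
both in `span (Ψ ∪ Ψ')`, where `𝒜` is a `δ`-restricted isometry. For orthogonal `u, v` of equal
norm in such a subspace, `‖u ± v‖² = 2‖u‖²`, so polarization and the two RIP bounds give
`⟨𝒜 u, 𝒜 v⟩ ≤ δ ‖u‖²`; applied to `u = ‖Y‖ • Z`, `v = ‖Z‖ • Y` this yields `‖Z‖² ≤ δ ‖Z‖ ‖Y‖`.
Flattening into `EuclideanSpace` carries `frobInner` to an inner product, so this estimate holds
in any real inner product space.
-/

open scoped RealInnerProductSpace

section RestrictedIsometry

variable {E F : Type*} [NormedAddCommGroup E] [InnerProductSpace ℝ E]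
  [NormedAddCommGroup F] [InnerProductSpace ℝ F] {A : E →ₗ[ℝ] F} {S : Submodule ℝ E} {δ : ℝ}

theorem inner_map_le_of_orthogonal_of_norm_eq
    (hRIP : ∀ x ∈ S, (1 - δ) * ‖x‖ ^ 2 ≤ ‖A x‖ ^ 2 ∧ ‖A x‖ ^ 2 ≤ (1 + δ) * ‖x‖ ^ 2)
    {u v : E} (hu : u ∈ S) (hv : v ∈ S) (huv : ⟪u, v⟫ = 0) (hnorm : ‖u‖ = ‖v‖) :
    ⟪A u, A v⟫ ≤ δ * ‖u‖ ^ 2 := by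
  have hadd : ‖u + v‖ ^ 2 = 2 * ‖u‖ ^ 2 := by rw [norm_add_sq_real, huv, hnorm]; ring
  have hsub : ‖u - v‖ ^ 2 = 2 * ‖u‖ ^ 2 := by rw [norm_sub_sq_real, huv, hnorm]; ring
  have hupper := (hRIP _ (S.add_mem hu hv)).2
  have hlower := (hRIP _ (S.sub_mem hu hv)).1
  rw [map_add, hadd, norm_add_sq_real] at hupper
  rw [map_sub, hsub, norm_sub_sq_real] at hlower
  linarith

theorem inner_map_le_of_orthogonal
    (hRIP : ∀ x ∈ S, (1 - δ) * ‖x‖ ^ 2 ≤ ‖A x‖ ^ 2 ∧ ‖A x‖ ^ 2 ≤ (1 + δ) * ‖x‖ ^ 2)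
    {y z : E} (hy : y ∈ S) (hz : z ∈ S) (hyz : ⟪y, z⟫ = 0) :
    ⟪A y, A z⟫ ≤ δ * ‖y‖ * ‖z‖ := by
  rcases eq_or_ne y 0 with rfl | hy0
  · simp
  rcases eq_or_ne z 0 with rfl | hz0
  · simp
  have hrescaled := inner_map_le_of_orthogonal_of_norm_eq hRIP
    (S.smul_mem ‖z‖ hy) (S.smul_mem ‖y‖ hz)
    (by rw [real_inner_smul_left, real_inner_smul_right, hyz]; ring)
    (by rw [norm_smul, norm_smul, Real.norm_of_nonneg (norm_nonneg _),
      Real.norm_of_nonneg (norm_nonneg _), mul_comm])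
  rw [map_smul, map_smul, real_inner_smul_left, real_inner_smul_right, norm_smul,
    Real.norm_of_nonneg (norm_nonneg _)] at hrescaled
  refine le_of_mul_le_mul_left ?_ (by positivity : 0 < ‖y‖ * ‖z‖)
  calc ‖y‖ * ‖z‖ * ⟪A y, A z⟫ = ‖z‖ * (‖y‖ * ⟪A y, A z⟫) := by ring
    _ ≤ δ * (‖z‖ * ‖y‖) ^ 2 := hrescaled
    _ = ‖y‖ * ‖z‖ * (δ * ‖y‖ * ‖z‖) := by ring

end RestrictedIsometry

section Frobenius

variable {m n p : ℕ}

def Matrix.toEuclideanSpace : Matrix (Fin m) (Fin n) ℝ ≃ₗ[ℝ] EuclideanSpace ℝ (Fin m × Fin n) :=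
  ((LinearEquiv.curry ℝ ℝ (Fin m) (Fin n)).trans (ofLinearEquiv ℝ)).symm.trans
    (WithLp.linearEquiv 2 ℝ _).symm

theorem inner_toEuclideanSpace (X Y : Matrix (Fin m) (Fin n) ℝ) :
    ⟪X.toEuclideanSpace, Y.toEuclideanSpace⟫ = frobInner X Y := by
  simp [toEuclideanSpace, PiLp.inner_apply, frobInner, Fintype.sum_prod_type, mul_comm]

theorem norm_toEuclideanSpace (X : Matrix (Fin m) (Fin n) ℝ) :
    ‖X.toEuclideanSpace‖ = frobNorm X := by
  rw [frobNorm, ← inner_toEuclideanSpace, real_inner_self_eq_norm_sq, Real.sqrt_sq (norm_nonneg _)]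

theorem frobNorm_sq (X : Matrix (Fin m) (Fin n) ℝ) : frobNorm X ^ 2 = frobInner X X := by
  rw [← norm_toEuclideanSpace, ← inner_toEuclideanSpace, real_inner_self_eq_norm_sq]

theorem frobNorm_nonneg (X : Matrix (Fin m) (Fin n) ℝ) : 0 ≤ frobNorm X :=
  Real.sqrt_nonneg _

theorem norm_toLp_eq_vecNorm (b : Fin p → ℝ) : ‖WithLp.toLp 2 b‖ = vecNorm b := by
  simp [EuclideanSpace.norm_eq, vecNorm]

theorem inner_toLp_toLp (b c : Fin p → ℝ) :
    ⟪WithLp.toLp 2 b, WithLp.toLp 2 c⟫ = ∑ i, b i * c i := by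
  simp [PiLp.inner_apply, mul_comm]

theorem frobInner_comm (X Y : Matrix (Fin m) (Fin n) ℝ) : frobInner X Y = frobInner Y X := by
  simp only [← inner_toEuclideanSpace, real_inner_comm]

theorem frobInner_sub_right (X Y Z : Matrix (Fin m) (Fin n) ℝ) :
    frobInner X (Y - Z) = frobInner X Y - frobInner X Z := by
  simp only [← inner_toEuclideanSpace, map_sub, inner_sub_right]

theorem frobInner_sum_smul_left {ι : Type*} (s : Finset ι) (c : ι → ℝ)
    (f : ι → Matrix (Fin m) (Fin n) ℝ) (Y : Matrix (Fin m) (Fin n) ℝ) :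
    frobInner (∑ i ∈ s, c i • f i) Y = ∑ i ∈ s, c i * frobInner (f i) Y := by
  simp only [← inner_toEuclideanSpace, map_sum, map_smul, sum_inner, real_inner_smul_left]

theorem sum_mul_le_of_rip {A : Matrix (Fin m) (Fin n) ℝ →ₗ[ℝ] (Fin p → ℝ)}
    {S : Submodule ℝ (Matrix (Fin m) (Fin n) ℝ)} {δ : ℝ}
    (hRIP : ∀ X ∈ S, (1 - δ) * frobNorm X ^ 2 ≤ vecNorm (A X) ^ 2 ∧
      vecNorm (A X) ^ 2 ≤ (1 + δ) * frobNorm X ^ 2)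
    {Y Z : Matrix (Fin m) (Fin n) ℝ} (hY : Y ∈ S) (hZ : Z ∈ S) (hYZ : frobInner Y Z = 0) :
    ∑ i, A Y i * A Z i ≤ δ * frobNorm Y * frobNorm Z := by
  let e := (toEuclideanSpace : Matrix (Fin m) (Fin n) ℝ ≃ₗ[ℝ] _)
  let A' := (WithLp.linearEquiv 2 ℝ (Fin p → ℝ)).symm.toLinearMap ∘ₗ A ∘ₗ e.symm.toLinearMap
  have hRIP' : ∀ x ∈ S.map e.toLinearMap,
      (1 - δ) * ‖x‖ ^ 2 ≤ ‖A' x‖ ^ 2 ∧ ‖A' x‖ ^ 2 ≤ (1 + δ) * ‖x‖ ^ 2 := by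
    rintro _ ⟨X, hX, rfl⟩
    simpa [A', e, norm_toEuclideanSpace, norm_toLp_eq_vecNorm] using hRIP X hX
  have := inner_map_le_of_orthogonal hRIP' (Submodule.mem_map_of_mem hY)
    (Submodule.mem_map_of_mem hZ) (by simpa [e, inner_toEuclideanSpace] using hYZ)
  simpa [A', e, inner_toLp_toLp, norm_toEuclideanSpace] using this

end Frobenius

section Projection

variable {m n : ℕ} {Ψ : Finset (Matrix (Fin m) (Fin n) ℝ)}

theorem frobInner_projSpan_left (Ψ : Finset (Matrix (Fin m) (Fin n) ℝ))
    (W V : Matrix (Fin m) (Fin n) ℝ) :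
    frobInner (projSpan Ψ W) V = ∑ ψ ∈ Ψ, frobInner ψ W * frobInner ψ V :=
  frobInner_sum_smul_left _ _ _ _

theorem frobInner_projSpan_right_of_mem (hΨ : IsOrthonormalSet Ψ)
    {ψ : Matrix (Fin m) (Fin n) ℝ} (hψ : ψ ∈ Ψ) (W : Matrix (Fin m) (Fin n) ℝ) :
    frobInner ψ (projSpan Ψ W) = frobInner ψ W := by
  rw [frobInner_comm, frobInner_projSpan_left, Finset.sum_eq_single_of_mem ψ hψ]
  · rw [hΨ.1 ψ hψ, mul_one, frobInner_comm]
  · intro φ hφ hne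
    rw [frobInner_comm φ ψ, hΨ.2 ψ hψ φ hφ hne.symm, mul_zero]

theorem frobInner_projSpan_sub_projSpan (hΨ : IsOrthonormalSet Ψ)
    (W X : Matrix (Fin m) (Fin n) ℝ) :
    frobInner (projSpan Ψ W) (X - projSpan Ψ X) = 0 := by
  rw [frobInner_projSpan_left]
  refine Finset.sum_eq_zero fun ψ hψ => ?_
  rw [frobInner_sub_right, frobInner_projSpan_right_of_mem hΨ hψ, sub_self, mul_zero]

theorem frobInner_projSpan_self (hΨ : IsOrthonormalSet Ψ) (W : Matrix (Fin m) (Fin n) ℝ) :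
    frobInner (projSpan Ψ W) (projSpan Ψ W) = frobInner W (projSpan Ψ W) := by
  rw [frobInner_comm W, frobInner_projSpan_left, frobInner_projSpan_left]
  exact Finset.sum_congr rfl fun ψ hψ => by rw [frobInner_projSpan_right_of_mem hΨ hψ]

theorem projSpan_mem_span (Ψ : Finset (Matrix (Fin m) (Fin n) ℝ))
    (W : Matrix (Fin m) (Fin n) ℝ) : projSpan Ψ W ∈ Submodule.span ℝ (Ψ : Set _) :=
  Submodule.sum_mem _ fun _ hψ => Submodule.smul_mem _ _ (Submodule.subset_span hψ)

end Projection

theorem proj_cross_bound_general {m n p r : ℕ}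
    (A : Matrix (Fin m) (Fin n) ℝ →ₗ[ℝ] (Fin p → ℝ))
    (Aadj : (Fin p → ℝ) →ₗ[ℝ] Matrix (Fin m) (Fin n) ℝ)
    (hadj : ∀ (X : Matrix (Fin m) (Fin n) ℝ) (c : Fin p → ℝ),
      ∑ i, A X i * c i = frobInner (Aadj c) X)
    (δ : ℝ) (hδ : 0 ≤ δ)
    (hRIP : ∀ X : Matrix (Fin m) (Fin n) ℝ, X.rank ≤ r →
      (1 - δ) * frobNorm X ^ 2 ≤ vecNorm (A X) ^ 2 ∧
        vecNorm (A X) ^ 2 ≤ (1 + δ) * frobNorm X ^ 2)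
    (Ψ Ψ' : Finset (Matrix (Fin m) (Fin n) ℝ))
    (hΨ : IsOrthonormalSet Ψ)
    (hrank : ∀ Z ∈ Submodule.span ℝ ((Ψ : Set (Matrix (Fin m) (Fin n) ℝ)) ∪ ↑Ψ'),
      Z.rank ≤ r) :
    ∀ X ∈ Submodule.span ℝ ((Ψ' : Set (Matrix (Fin m) (Fin n) ℝ))),
      frobNorm (projSpan Ψ (Aadj (A (X - projSpan Ψ X)))) ≤
        δ * frobNorm (X - projSpan Ψ X) := by
  intro X hX
  set S := Submodule.span ℝ ((Ψ : Set (Matrix (Fin m) (Fin n) ℝ)) ∪ ↑Ψ')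
  have hΨS : Submodule.span ℝ (Ψ : Set (Matrix (Fin m) (Fin n) ℝ)) ≤ S :=
    Submodule.span_mono Set.subset_union_left
  set Y := X - projSpan Ψ X
  set Z := projSpan Ψ (Aadj (A Y))
  have hY : Y ∈ S :=
    S.sub_mem (Submodule.span_mono Set.subset_union_right hX) (hΨS (projSpan_mem_span Ψ X))
  have hZ : Z ∈ S := hΨS (projSpan_mem_span Ψ _)
  have hZY : frobNorm Z ^ 2 ≤ δ * frobNorm Z * frobNorm Y :=
    calc frobNorm Z ^ 2 = frobInner (Aadj (A Y)) Z := by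
          rw [frobNorm_sq, frobInner_projSpan_self hΨ]
      _ = ∑ i, A Z i * A Y i := (hadj Z (A Y)).symm
      _ ≤ δ * frobNorm Z * frobNorm Y :=
          sum_mul_le_of_rip (fun W hW => hRIP W (hrank W hW)) hZ hY
            (frobInner_projSpan_sub_projSpan hΨ _ X)
  nlinarith [frobNorm_nonneg Z, mul_nonneg hδ (frobNorm_nonneg Y)]

/-- Proposition 2.2: ‖P_Ψ 𝒜* 𝒜 (I − P_Ψ) X‖_F ≤ δ_r ‖(I − P_Ψ) X‖_F for X ∈ span Ψ'. -/
theorem proj_cross_bound {m n p r : ℕ}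
    (A : Matrix (Fin m) (Fin n) ℝ →ₗ[ℝ] (Fin p → ℝ))
    (Aadj : (Fin p → ℝ) →ₗ[ℝ] Matrix (Fin m) (Fin n) ℝ)
    (hadj : ∀ (X : Matrix (Fin m) (Fin n) ℝ) (c : Fin p → ℝ),
      ∑ i, A X i * c i = frobInner (Aadj c) X)
    (δ : ℝ) (hδ : 0 ≤ δ)
    (hRIP : ∀ X : Matrix (Fin m) (Fin n) ℝ, X.rank ≤ r →
      (1 - δ) * frobNorm X ^ 2 ≤ vecNorm (A X) ^ 2 ∧
        vecNorm (A X) ^ 2 ≤ (1 + δ) * frobNorm X ^ 2)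
    (Ψ Ψ' : Finset (Matrix (Fin m) (Fin n) ℝ))
    (hΨ : IsOrthonormalSet Ψ) (hΨ' : IsOrthonormalSet Ψ')
    (hrank : ∀ Z ∈ Submodule.span ℝ ((Ψ : Set (Matrix (Fin m) (Fin n) ℝ)) ∪ ↑Ψ'),
      Z.rank ≤ r) :
    ∀ X ∈ Submodule.span ℝ ((Ψ' : Set (Matrix (Fin m) (Fin n) ℝ))),
      frobNorm (projSpan Ψ (Aadj (A (X - projSpan Ψ X)))) ≤
        δ * frobNorm (X - projSpan Ψ X) :=
  proj_cross_bound_general A Aadj hadj δ hδ hRIP Ψ Ψ' hΨ hrank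
end

section
/- Suppose b = 𝒜X_r + e where X_r has rank at most r, 𝒜 satisfies the RIP with δ_{3r}(𝒜) < 1/√32, and μ > 0. Define the IHTMS iteration: Y^{k+1} = X^k − 𝒜*(𝒜X^k − b), X^{k+1} = R_r(S_μ(Y^{k+1})). Then for every k ≥ 0, ‖X_r − X^k‖_F ≤ 2^{-k} ‖X_r − X^0‖_F + 4.34 ‖e‖₂ + 4μ√m (for matrices in ℝ^{m×n} with m ≤ n). -/
/-!
Write `W = Xr - X (k+1)`, `D = Xr - X k` and `Z = S_μ (Y (k+1))`. Since `X (k+1)` is at least as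
close to `Z` as the rank-`r` matrix `Xr`, `‖W‖² ≤ 2 ⟪W, Xr - Z⟫`. Splitting
`Xr - Z = (D - 𝒜*𝒜 D) - 𝒜* e + (Y (k+1) - Z)`, the first term contributes at most `δ ‖W‖ ‖D‖`
(polarize the RIP on `span {W, D}`, whose elements have rank `≤ 3r`), the second at most
`√(1 + δ) ‖W‖ ‖e‖`, and soft shrinkage moves `Y (k+1)` by at most `μ √m`. Hence
`‖W‖ ≤ 2δ ‖D‖ + 2√(1 + δ) ‖e‖ + 2μ√m`, which for `δ < 1/√32` is a contraction by `1/2` up to the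
additive term `2.17 ‖e‖ + 2μ√m`; summing the geometric series gives the bound.
-/


open scoped BigOperators
open Matrix

noncomputable section

/-- `X` is a best rank-`r` approximation (in Frobenius norm) of `Y`. -/
def IsBestRankApprox {m n : ℕ} (r : ℕ) (Y X : Matrix (Fin m) (Fin n) ℝ) : Prop :=
  X.rank ≤ r ∧ ∀ Z : Matrix (Fin m) (Fin n) ℝ, Z.rank ≤ r → frobNorm (X - Y) ≤ frobNorm (Z - Y)

/-- Rectangular diagonal matrix with diagonal entries σ. -/
def rectDiag {m n : ℕ} (σ : Fin m → ℝ) : Matrix (Fin m) (Fin n) ℝ :=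
  Matrix.of fun i j => if (j : ℕ) = (i : ℕ) then σ i else 0

/-- `(U, σ, V)` is a (full) singular value decomposition of `Y`, with the
singular values σ nonnegative and nonincreasing. -/
def IsSVD {m n : ℕ} (Y : Matrix (Fin m) (Fin n) ℝ) (U : Matrix (Fin m) (Fin m) ℝ)
    (σ : Fin m → ℝ) (V : Matrix (Fin n) (Fin n) ℝ) : Prop :=
  Uᵀ * U = 1 ∧ Vᵀ * V = 1 ∧ (∀ i, 0 ≤ σ i) ∧ (∀ i j : Fin m, i ≤ j → σ j ≤ σ i) ∧
    Y = U * rectDiag σ * Vᵀ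

/-- `Z = S_μ(Y)`: soft shrinkage of the singular values of `Y` by `μ`. -/
def IsSoftShrink {m n : ℕ} (μ : ℝ) (Y Z : Matrix (Fin m) (Fin n) ℝ) : Prop :=
  ∃ U σ V, IsSVD Y U σ V ∧ Z = U * rectDiag (fun i => max (σ i - μ) 0) * Vᵀ

/-- `Z = R_r(Y)`: hard thresholding keeping the `r` largest singular values of `Y`. -/
def IsHardThresh {m n : ℕ} (r : ℕ) (Y Z : Matrix (Fin m) (Fin n) ℝ) : Prop :=
  ∃ U σ V, IsSVD Y U σ V ∧ Z = U * rectDiag (fun i => if (i : ℕ) < r then σ i else 0) * Vᵀ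

open scoped RealInnerProductSpace

section RestrictedIsometry

variable {E F : Type*} [NormedAddCommGroup E] [InnerProductSpace ℝ E]
  [NormedAddCommGroup F] [InnerProductSpace ℝ F]

def IsRestrictedIsometryOn (A : E →ₗ[ℝ] F) (δ : ℝ) (K : Set E) : Prop :=
  ∀ x ∈ K, (1 - δ) * ‖x‖ ^ 2 ≤ ‖A x‖ ^ 2 ∧ ‖A x‖ ^ 2 ≤ (1 + δ) * ‖x‖ ^ 2

theorem norm_sub_sq_le_two_mul_inner_of_norm_le {a c : E} (h : ‖a‖ ≤ ‖c‖) :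
    ‖c - a‖ ^ 2 ≤ 2 * ⟪c - a, c⟫ := by
  rw [norm_sub_sq_real, inner_sub_left, real_inner_self_eq_norm_sq, real_inner_comm]
  nlinarith [norm_nonneg a]

theorem norm_smul_add_smul_sq (a b : ℝ) (x y : E) :
    ‖a • x + b • y‖ ^ 2 = a ^ 2 * ‖x‖ ^ 2 + 2 * a * b * ⟪x, y⟫ + b ^ 2 * ‖y‖ ^ 2 := by
  rw [norm_add_sq_real, norm_smul, norm_smul, real_inner_smul_left, real_inner_smul_right,
    mul_pow, mul_pow, Real.norm_eq_abs, Real.norm_eq_abs, sq_abs, sq_abs]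
  ring

theorem IsRestrictedIsometryOn.inner_sub_inner_le {A : E →ₗ[ℝ] F} {δ : ℝ} {x y : E}
    (h : IsRestrictedIsometryOn A δ (Submodule.span ℝ {x, y})) :
    ⟪x, y⟫ - ⟪A x, A y⟫ ≤ δ * ‖x‖ * ‖y‖ := by
  rcases eq_or_ne x 0 with rfl | hx
  · simp
  rcases eq_or_ne y 0 with rfl | hy
  · simp
  have hspan (a b : ℝ) : a • x + b • y ∈ Submodule.span ℝ {x, y} :=
    Submodule.mem_span_pair.2 ⟨a, b, rfl⟩
  -- Polarization: bound `‖y‖ • x + ‖x‖ • y` from below and `‖y‖ • x - ‖x‖ • y` from above.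
  have hP := (h _ (hspan ‖y‖ ‖x‖)).1
  have hQ := (h _ (hspan ‖y‖ (-‖x‖))).2
  simp only [map_add, map_smul, norm_smul_add_smul_sq] at hP hQ
  have hxy : 0 < ‖x‖ * ‖y‖ := by positivity
  refine le_of_mul_le_mul_left ?_ hxy
  linear_combination (hP + hQ) / 4

theorem norm_sub_le_of_ihtStep (A : E →ₗ[ℝ] F) (Aadj : F →ₗ[ℝ] E)
    (hadj : ∀ x c, ⟪A x, c⟫ = ⟪Aadj c, x⟫) {δ ε : ℝ} (hδ : 0 ≤ δ) {xr x x' z : E} (e : F)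
    (hRIP : IsRestrictedIsometryOn A δ (Submodule.span ℝ {xr - x', xr - x}))
    (hz : ‖x - Aadj (A x - (A xr + e)) - z‖ ≤ ε) (hbest : ‖x' - z‖ ≤ ‖xr - z‖) :
    ‖xr - x'‖ ≤ 2 * δ * ‖xr - x‖ + 2 * √(1 + δ) * ‖e‖ + 2 * ε := by
  set w := xr - x'
  set d := xr - x
  set y := x - Aadj (A x - (A xr + e))
  have hsq : ‖w‖ ^ 2 ≤ 2 * ⟪w, xr - z⟫ := by
    simpa only [sub_sub_sub_cancel_right] using norm_sub_sq_le_two_mul_inner_of_norm_le hbest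
  have hsplit : ⟪w, xr - z⟫ = (⟪w, d⟫ - ⟪A w, A d⟫) - ⟪A w, e⟫ + ⟪w, y - z⟫ := by
    have : xr - z = d - Aadj (A d) - Aadj e + (y - z) := by
      simp only [y, d, map_sub, map_add]
      abel
    rw [this, inner_add_right, inner_sub_right, inner_sub_right, hadj, hadj,
      real_inner_comm w, real_inner_comm w]
  have hcross := hRIP.inner_sub_inner_le
  have hAw : ‖A w‖ ≤ √(1 + δ) * ‖w‖ := by
    rw [← Real.sqrt_sq (norm_nonneg (A w)), ← Real.sqrt_sq (norm_nonneg w),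
      ← Real.sqrt_mul' _ (sq_nonneg _)]
    exact Real.sqrt_le_sqrt (hRIP w (Submodule.subset_span (by simp))).2
  have herr : -⟪A w, e⟫ ≤ √(1 + δ) * ‖w‖ * ‖e‖ :=
    (neg_le_abs _).trans ((abs_real_inner_le_norm _ _).trans (by gcongr))
  have hshr : ⟪w, y - z⟫ ≤ ‖w‖ * ε := (real_inner_le_norm _ _).trans (by gcongr)
  have key : ‖w‖ * ‖w‖ ≤ ‖w‖ * (2 * δ * ‖d‖ + 2 * √(1 + δ) * ‖e‖ + 2 * ε) := by
    linarith
  rcases (norm_nonneg w).eq_or_lt with hw | hw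
  · rw [← hw]
    have hε : 0 ≤ ε := (norm_nonneg _).trans hz
    positivity
  · exact le_of_mul_le_mul_left key hw

end RestrictedIsometry

theorem le_pow_mul_add_mul_geom_sum {a : ℕ → ℝ} {q c : ℝ} (hq : 0 ≤ q)
    (h : ∀ k, a (k + 1) ≤ q * a k + c) (k : ℕ) :
    a k ≤ q ^ k * a 0 + c * ∑ i ∈ Finset.range k, q ^ i := by
  induction k with
  | zero => simp
  | succ k ih =>
    calc a (k + 1) ≤ q * a k + c := h k
      _ ≤ q * (q ^ k * a 0 + c * ∑ i ∈ Finset.range k, q ^ i) + c := by gcongr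
      _ = q ^ (k + 1) * a 0 + c * ∑ i ∈ Finset.range (k + 1), q ^ i := by
        rw [geom_sum_succ]; ring

section Frobenius

variable {m n : ℕ}

-- Real matrices carry no global norm; with the Frobenius structure installed locally,
-- `frobInner` and `frobNorm` are the inner product and the norm by `rfl`.
abbrev frobeniusInnerCore : InnerProductSpace.Core ℝ (Matrix (Fin m) (Fin n) ℝ) where
  inner := frobInner
  conj_inner_symm X Y := by simp [frobInner, mul_comm]
  re_inner_nonneg X := by
    rw [RCLike.re_to_real]
    exact Finset.sum_nonneg fun i _ => Finset.sum_nonneg fun j _ => mul_self_nonneg (X i j)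
  add_left X Y Z := by simp [frobInner, add_mul, Finset.sum_add_distrib]
  smul_left X Y c := by simp [frobInner, Finset.mul_sum, mul_assoc]
  definite X h := by
    ext i j
    have hi := (Finset.sum_eq_zero_iff_of_nonneg fun i _ =>
      Finset.sum_nonneg fun j _ => mul_self_nonneg (X i j)).1 h i (Finset.mem_univ _)
    simpa using (Finset.sum_eq_zero_iff_of_nonneg fun j _ =>
      mul_self_nonneg (X i j)).1 hi j (Finset.mem_univ _)

abbrev frobeniusInnerNormedAddCommGroup : NormedAddCommGroup (Matrix (Fin m) (Fin n) ℝ) :=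
  frobeniusInnerCore.toNormedAddCommGroup

attribute [local instance] frobeniusInnerNormedAddCommGroup

abbrev frobeniusInnerProductSpace : InnerProductSpace ℝ (Matrix (Fin m) (Fin n) ℝ) :=
  InnerProductSpace.ofCore frobeniusInnerCore.toCore

attribute [local instance] frobeniusInnerProductSpace

theorem frobNorm_eq_norm (X : Matrix (Fin m) (Fin n) ℝ) : frobNorm X = ‖X‖ := rfl

theorem frobInner_eq_inner (X Y : Matrix (Fin m) (Fin n) ℝ) : frobInner X Y = ⟪X, Y⟫ := rfl

theorem vecNorm_eq_norm {p : ℕ} (b : Fin p → ℝ) :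
    vecNorm b = ‖(WithLp.toLp 2 b : EuclideanSpace ℝ (Fin p))‖ := by
  simp [vecNorm, EuclideanSpace.norm_eq]

theorem Matrix.rank_add_le (X Y : Matrix (Fin m) (Fin n) ℝ) :
    (X + Y).rank ≤ X.rank + Y.rank := by
  rw [Matrix.rank, Matrix.rank, Matrix.rank, Matrix.mulVecLin_add]
  calc Module.finrank ℝ (LinearMap.range (X.mulVecLin + Y.mulVecLin))
      ≤ Module.finrank ℝ ↥(LinearMap.range X.mulVecLin ⊔ LinearMap.range Y.mulVecLin) :=
        Submodule.finrank_mono (LinearMap.range_add_le _ _)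
    _ ≤ _ := Submodule.finrank_add_le_finrank_add_finrank _ _

theorem Matrix.rank_smul_le (c : ℝ) (X : Matrix (Fin m) (Fin n) ℝ) : (c • X).rank ≤ X.rank := by
  simpa only [Matrix.smul_mul, Matrix.one_mul] using
    Matrix.rank_mul_le_right (c • 1 : Matrix (Fin m) (Fin m) ℝ) X

theorem Matrix.rank_smul_add_smul_add_smul_le (a b c : ℝ) (P Q R : Matrix (Fin m) (Fin n) ℝ) :
    (a • P + b • Q + c • R).rank ≤ P.rank + Q.rank + R.rank :=
  calc (a • P + b • Q + c • R).rank ≤ (a • P).rank + (b • Q).rank + (c • R).rank :=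
        (Matrix.rank_add_le _ _).trans (by gcongr; exact Matrix.rank_add_le _ _)
    _ ≤ P.rank + Q.rank + R.rank := by
        gcongr <;> exact Matrix.rank_smul_le _ _

theorem frobInner_eq_trace (X Y : Matrix (Fin m) (Fin n) ℝ) :
    frobInner X Y = (Xᵀ * Y).trace := by
  simp only [frobInner, Matrix.trace, Matrix.diag, Matrix.mul_apply, Matrix.transpose_apply]
  rw [Finset.sum_comm]

theorem frobNorm_mul_mul_transpose {U : Matrix (Fin m) (Fin m) ℝ} {V : Matrix (Fin n) (Fin n) ℝ}
    (hU : Uᵀ * U = 1) (hV : Vᵀ * V = 1) (M : Matrix (Fin m) (Fin n) ℝ) :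
    frobNorm (U * M * Vᵀ) = frobNorm M := by
  rw [frobNorm, frobNorm, frobInner_eq_trace, frobInner_eq_trace]
  congr 1
  calc ((U * M * Vᵀ)ᵀ * (U * M * Vᵀ)).trace = (V * (Mᵀ * (Uᵀ * U) * M) * Vᵀ).trace := by
        simp only [Matrix.transpose_mul, Matrix.transpose_transpose, Matrix.mul_assoc]
    _ = (Mᵀ * M).trace := by
        rw [Matrix.trace_mul_comm, ← Matrix.mul_assoc, hV, Matrix.one_mul, hU, Matrix.mul_one]

theorem rectDiag_sub (σ τ : Fin m → ℝ) :
    (rectDiag σ - rectDiag τ : Matrix (Fin m) (Fin n) ℝ) = rectDiag (σ - τ) := by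
  ext i j
  simp only [rectDiag, Matrix.sub_apply, Matrix.of_apply, Pi.sub_apply]
  split_ifs <;> simp

theorem frobInner_rectDiag_self_le (τ : Fin m → ℝ) :
    frobInner (rectDiag τ : Matrix (Fin m) (Fin n) ℝ) (rectDiag τ) ≤ ∑ i, τ i ^ 2 := by
  refine Finset.sum_le_sum fun i _ => ?_
  simp only [rectDiag, Matrix.of_apply]
  by_cases hi : (i : ℕ) < n
  · rw [Finset.sum_eq_single (⟨i, hi⟩ : Fin n)
      (fun j _ hj => by simp [show (j : ℕ) ≠ i from fun h => hj (Fin.ext h)]) (by simp)]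
    simp [sq]
  · have hne (j : Fin n) : (j : ℕ) ≠ i := fun h => hi (h ▸ j.2)
    simpa [hne] using sq_nonneg (τ i)

theorem IsSoftShrink.frobNorm_sub_le {μ : ℝ} (hμ : 0 ≤ μ) {Y Z : Matrix (Fin m) (Fin n) ℝ}
    (h : IsSoftShrink μ Y Z) : frobNorm (Y - Z) ≤ μ * √m := by
  obtain ⟨U, σ, V, ⟨hU, hV, hσ, -, hY⟩, hZ⟩ := h
  -- Without the ascription the product would be elaborated with `CStarMatrix`'s multiplication,
  -- as it is in `IsSVD`, and `Matrix.mul_sub` would not apply.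
  have hYZ : Y - Z =
      U * (rectDiag σ - rectDiag fun i => max (σ i - μ) 0 : Matrix (Fin m) (Fin n) ℝ) * Vᵀ := by
    rw [Matrix.mul_sub, Matrix.sub_mul]
    exact congrArg₂ (· - ·) hY hZ
  rw [hYZ, rectDiag_sub, frobNorm_mul_mul_transpose hU hV]
  calc frobNorm (rectDiag (σ - fun i => max (σ i - μ) 0) : Matrix (Fin m) (Fin n) ℝ)
      ≤ √(∑ i, (σ i - max (σ i - μ) 0) ^ 2) := Real.sqrt_le_sqrt (frobInner_rectDiag_self_le _)
    _ ≤ √(∑ _i : Fin m, μ ^ 2) := by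
        gcongr with i
        · exact sub_nonneg.2 (max_le (by linarith) (hσ i))
        · linarith [le_max_left (σ i - μ) 0]
    _ = μ * √m := by
        rw [Finset.sum_const, Finset.card_univ, Fintype.card_fin, nsmul_eq_mul, mul_comm,
          Real.sqrt_mul' _ (Nat.cast_nonneg m), Real.sqrt_sq hμ]

theorem frobNorm_sub_le_of_ihtmsStep {p r : ℕ} (A : Matrix (Fin m) (Fin n) ℝ →ₗ[ℝ] (Fin p → ℝ))
    (Aadj : (Fin p → ℝ) →ₗ[ℝ] Matrix (Fin m) (Fin n) ℝ)
    (hadj : ∀ (X : Matrix (Fin m) (Fin n) ℝ) (c : Fin p → ℝ),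
      ∑ i, A X i * c i = frobInner (Aadj c) X)
    {δ : ℝ} (hδ : 0 ≤ δ)
    (hRIP : ∀ X : Matrix (Fin m) (Fin n) ℝ, X.rank ≤ 3 * r →
      (1 - δ) * frobNorm X ^ 2 ≤ vecNorm (A X) ^ 2 ∧
        vecNorm (A X) ^ 2 ≤ (1 + δ) * frobNorm X ^ 2)
    {μ : ℝ} (hμ : 0 ≤ μ) {Xr X X' Z : Matrix (Fin m) (Fin n) ℝ} (e : Fin p → ℝ)
    (hXr : Xr.rank ≤ r) (hX : X.rank ≤ r)
    (hZ : IsSoftShrink μ (X - Aadj (A X - (A Xr + e))) Z) (hX' : IsBestRankApprox r Z X') :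
    frobNorm (Xr - X') ≤
      2 * δ * frobNorm (Xr - X) + 2 * √(1 + δ) * vecNorm e + 2 * (μ * √m) := by
  let L := WithLp.linearEquiv 2 ℝ (Fin p → ℝ)
  have hL (c : Fin p → ℝ) : vecNorm c = ‖L.symm c‖ := vecNorm_eq_norm c
  rw [hL]
  refine norm_sub_le_of_ihtStep (L.symm.toLinearMap ∘ₗ A) (Aadj ∘ₗ L.toLinearMap) ?_ hδ _ ?_ ?_
    (hX'.2 Xr hXr)
  · intro x c
    rw [LinearMap.comp_apply, LinearMap.comp_apply, ← frobInner_eq_inner, ← hadj,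
      EuclideanSpace.inner_eq_star_dotProduct]
    simp [L, dotProduct, mul_comm]
  · intro x hx
    obtain ⟨a, b, rfl⟩ := Submodule.mem_span_pair.1 hx
    have hrank : (a • (Xr - X') + b • (Xr - X)).rank ≤ 3 * r := by
      rw [show a • (Xr - X') + b • (Xr - X) = (a + b) • Xr + (-a) • X' + (-b) • X by module]
      have := Matrix.rank_smul_add_smul_add_smul_le (a + b) (-a) (-b) Xr X' X
      have := hX'.1
      omega
    simpa only [LinearMap.comp_apply, LinearEquiv.coe_coe, ← hL, frobNorm_eq_norm] using
      hRIP _ hrank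
  · simpa [L, frobNorm_eq_norm] using hZ.frobNorm_sub_le hμ

end Frobenius

theorem one_div_sqrt_32_lt : 1 / √32 < 0.1768 := by
  rw [one_div, ← Real.sqrt_inv, Real.sqrt_lt' (by norm_num)]
  norm_num

theorem ihtms_convergence_general {m n p r : ℕ}
    (A : Matrix (Fin m) (Fin n) ℝ →ₗ[ℝ] (Fin p → ℝ))
    (Aadj : (Fin p → ℝ) →ₗ[ℝ] Matrix (Fin m) (Fin n) ℝ)
    (hadj : ∀ (X : Matrix (Fin m) (Fin n) ℝ) (c : Fin p → ℝ),
      ∑ i, A X i * c i = frobInner (Aadj c) X)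
    (δ : ℝ) (hδ : 0 ≤ δ) (hδsmall : δ < 1 / Real.sqrt 32)
    (hRIP : ∀ X : Matrix (Fin m) (Fin n) ℝ, X.rank ≤ 3 * r →
      (1 - δ) * frobNorm X ^ 2 ≤ vecNorm (A X) ^ 2 ∧
        vecNorm (A X) ^ 2 ≤ (1 + δ) * frobNorm X ^ 2)
    (μ : ℝ) (hμ : 0 < μ)
    (Xr : Matrix (Fin m) (Fin n) ℝ) (hXr : Xr.rank ≤ r)
    (e : Fin p → ℝ) (b : Fin p → ℝ) (hb : b = A Xr + e)
    (X : ℕ → Matrix (Fin m) (Fin n) ℝ) (Y : ℕ → Matrix (Fin m) (Fin n) ℝ)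
    (hX0 : (X 0).rank ≤ r)
    (hY : ∀ k, Y (k + 1) = X k - Aadj (A (X k) - b))
    (hXstep : ∀ k, ∃ Z, IsSoftShrink μ (Y (k + 1)) Z ∧ IsBestRankApprox r Z (X (k + 1))) :
    ∀ k, frobNorm (Xr - X k) ≤
      (1 / 2 : ℝ) ^ k * frobNorm (Xr - X 0) + 4.34 * vecNorm e +
        4 * μ * Real.sqrt m := by
  have hrank : ∀ k, (X k).rank ≤ r := Nat.rec hX0 fun k _ => (hXstep k).choose_spec.2.1
  have hδ' := hδsmall.trans one_div_sqrt_32_lt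
  have hsqrt : √(1 + δ) ≤ 1.085 := Real.sqrt_le_iff.2 ⟨by norm_num, by linarith⟩
  have he : 0 ≤ vecNorm e := Real.sqrt_nonneg _
  set c := 2.17 * vecNorm e + 2 * (μ * √m) with hc
  have hstep (k : ℕ) : frobNorm (Xr - X (k + 1)) ≤ 1 / 2 * frobNorm (Xr - X k) + c := by
    obtain ⟨Z, hZ, hX'⟩ := hXstep k
    rw [hY, hb] at hZ
    have := frobNorm_sub_le_of_ihtmsStep A Aadj hadj hδ hRIP hμ.le e hXr (hrank k) hZ hX'
    have hd : 0 ≤ frobNorm (Xr - X k) := Real.sqrt_nonneg _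
    have h1 := mul_le_mul_of_nonneg_right (show 2 * δ ≤ 1 / 2 by linarith) hd
    have h2 := mul_le_mul_of_nonneg_right (show 2 * √(1 + δ) ≤ 2.17 by linarith) he
    linarith
  intro k
  calc frobNorm (Xr - X k)
      ≤ (1 / 2) ^ k * frobNorm (Xr - X 0) + c * ∑ i ∈ Finset.range k, (1 / 2 : ℝ) ^ i :=
        le_pow_mul_add_mul_geom_sum (a := fun k => frobNorm (Xr - X k)) (by norm_num) hstep k
    _ ≤ (1 / 2) ^ k * frobNorm (Xr - X 0) + c * 2 := by
        gcongr
        exact sum_geometric_two_le k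
    _ = _ := by ring

/-- Theorem 5.1: convergence of IHTMS (iterative hard thresholding with matrix
shrinkage) for exact rank-r data. -/
theorem ihtms_convergence {m n p r : ℕ} (hmn : m ≤ n)
    (A : Matrix (Fin m) (Fin n) ℝ →ₗ[ℝ] (Fin p → ℝ))
    (Aadj : (Fin p → ℝ) →ₗ[ℝ] Matrix (Fin m) (Fin n) ℝ)
    (hadj : ∀ (X : Matrix (Fin m) (Fin n) ℝ) (c : Fin p → ℝ),
      ∑ i, A X i * c i = frobInner (Aadj c) X)
    (δ : ℝ) (hδ : 0 ≤ δ) (hδsmall : δ < 1 / Real.sqrt 32)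
    (hRIP : ∀ X : Matrix (Fin m) (Fin n) ℝ, X.rank ≤ 3 * r →
      (1 - δ) * frobNorm X ^ 2 ≤ vecNorm (A X) ^ 2 ∧
        vecNorm (A X) ^ 2 ≤ (1 + δ) * frobNorm X ^ 2)
    (μ : ℝ) (hμ : 0 < μ)
    (Xr : Matrix (Fin m) (Fin n) ℝ) (hXr : Xr.rank ≤ r)
    (e : Fin p → ℝ) (b : Fin p → ℝ) (hb : b = A Xr + e)
    (X : ℕ → Matrix (Fin m) (Fin n) ℝ) (Y : ℕ → Matrix (Fin m) (Fin n) ℝ)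
    (hX0 : (X 0).rank ≤ r)
    (hY : ∀ k, Y (k + 1) = X k - Aadj (A (X k) - b))
    (hXstep : ∀ k, ∃ Z, IsSoftShrink μ (Y (k + 1)) Z ∧ IsBestRankApprox r Z (X (k + 1))) :
    ∀ k, frobNorm (Xr - X k) ≤
      (1 / 2 : ℝ) ^ k * frobNorm (Xr - X 0) + 4.34 * vecNorm e +
        4 * μ * Real.sqrt m :=
  ihtms_convergence_general A Aadj hadj δ hδ hδsmall hRIP μ hμ Xr hXr e b hb X Y hX0 hY hXstep
end
end
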